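/- Let 0 < t ≤ 1. The right spectra satisfy σ_r(T) ⊆ σ_r(Δ_t(T)) ⊆ σ_r(T) ∪ {0}; explicitly: (a) for every λ ∈ ℂ^d, if the tuple Δ_t(T) − λ is right invertible then the tuple T − λ is right invertible; and (b) for every λ ∈ ℂ^d with λ ≠ 0, if T − λ is right invertible then Δ_t(T) − λ is right invertible. -/

import Mathlib

/-! With `Q = P ^ t` and `R = P ^ (1 - t)` we have `R * Q = P`, hence `Q * T i = Δ i * Q`; the
commutativity of `T` forces `V i * P * V j = V j * P * V i`, which gives
`(V j * R) * Δ i = T i * (V j * R)` as well. An intertwiner `w` carries a right inverse of `S - λ`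
to elements `C i` with `∑ (S' i - λ i) * C i = w * q` for any `q`. Since `Q * (V j * R) = Δ j`
and `(V j * R) * Q = T j`, a nonzero coordinate `λ j` lets one correct `w * q = S' j` to `1`.
At `λ = 0`, right invertibility of `Δ` makes the self-adjoint `Q` right invertible, hence
invertible, and `Q⁻¹` intertwines `Δ` with `T`. -/

section RightInvertibleTuple

variable {𝕜 A ι : Type*} [Ring A] [Fintype ι]

def IsRightInvertibleTuple (S : ι → A) : Prop := ∃ B : ι → A, ∑ i, S i * B i = 1

lemma sum_sub_smul_one_mul_of_semiconjBy [CommSemiring 𝕜] [Algebra 𝕜 A] {S S' : ι → A} {w : A}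
    (hw : ∀ i, SemiconjBy w (S i) (S' i)) (lam : ι → 𝕜) (B : ι → A) (q : A) :
    ∑ i, (S' i - lam i • 1) * (w * B i * q) = w * (∑ i, (S i - lam i • 1) * B i) * q := by
  have hw' : ∀ i, (S' i - lam i • 1) * w = w * (S i - lam i • 1) := fun i => by
    rw [sub_mul, mul_sub, (hw i).eq, smul_mul_assoc, mul_smul_comm, one_mul, mul_one]
  simp only [Finset.mul_sum, Finset.sum_mul, ← mul_assoc, hw']

lemma IsRightInvertibleTuple.of_semiconjBy_of_mul_eq_one [CommSemiring 𝕜] [Algebra 𝕜 A]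
    {S S' : ι → A} {w q : A} (hw : ∀ i, SemiconjBy w (S i) (S' i)) (hq : w * q = 1) {lam : ι → 𝕜}
    (h : IsRightInvertibleTuple fun i => S i - lam i • 1) :
    IsRightInvertibleTuple fun i => S' i - lam i • 1 := by
  obtain ⟨B, hB⟩ := h
  exact ⟨fun i => w * B i * q, by rw [sum_sub_smul_one_mul_of_semiconjBy hw, hB, mul_one, hq]⟩

/-- The transported right inverse produces `S' j`; subtracting the `j`-th entry `S' j - λ j`
leaves `λ j`, which is then divided out. -/
lemma IsRightInvertibleTuple.of_semiconjBy_of_mul_eq [Semifield 𝕜] [Algebra 𝕜 A]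
    {S S' : ι → A} {w q : A} {j : ι}
    (hw : ∀ i, SemiconjBy w (S i) (S' i)) (hq : w * q = S' j) {lam : ι → 𝕜} (hj : lam j ≠ 0)
    (h : IsRightInvertibleTuple fun i => S i - lam i • 1) :
    IsRightInvertibleTuple fun i => S' i - lam i • 1 := by
  classical
  obtain ⟨B, hB⟩ := h
  refine ⟨fun i => (lam j)⁻¹ • (w * B i * q - if i = j then 1 else 0), ?_⟩
  simp only [mul_smul_comm, mul_sub, ← Finset.smul_sum, Finset.sum_sub_distrib,
    sum_sub_smul_one_mul_of_semiconjBy hw, hB, mul_one, hq, mul_ite, mul_zero, Finset.sum_ite_eq',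
    Finset.mem_univ, if_true, sub_sub_cancel, smul_smul, inv_mul_cancel₀ hj, one_smul]

end RightInvertibleTuple

lemma IsSelfAdjoint.isUnit_of_mul_eq_one {R : Type*} [Monoid R] [StarMul R] {a b : R}
    (ha : IsSelfAdjoint a) (h : a * b = 1) : IsUnit a := by
  refine isUnit_iff_exists_and_exists.mpr ⟨⟨b, h⟩, star b, ?_⟩
  simpa [ha.star_eq] using congrArg star h

lemma CFC.rpow_add_of_nonneg {A : Type*} [PartialOrder A] [Ring A] [StarRing A]
    [TopologicalSpace A] [StarOrderedRing A] [Algebra ℝ A]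
    [ContinuousFunctionalCalculus ℝ A IsSelfAdjoint] [NonnegSpectrumClass ℝ A]
    (a : A) {x y : ℝ} (hx : 0 ≤ x) (hy : 0 ≤ y) (hxy : x + y ≠ 0) :
    a ^ (x + y) = a ^ x * a ^ y := by
  simp only [CFC.rpow_def]
  rw [← cfc_mul _ _ a (NNReal.continuousOn_rpow_const (Or.inr hx))
    (NNReal.continuousOn_rpow_const (Or.inr hy))]
  exact cfc_congr fun z _ => NNReal.rpow_add' hxy z

section HilbertSpace

variable {𝕜 E : Type*} [RCLike 𝕜] [NormedAddCommGroup E] [InnerProductSpace 𝕜 E]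
  [CompleteSpace E]

lemma apply_eq_zero_of_sum_star_mul_self_apply_eq_zero {ι : Type*} [Fintype ι]
    {V : ι → E →L[𝕜] E} {z : E} (hz : (∑ i, star (V i) * V i) z = 0) (i : ι) : V i z = 0 := by
  have hsum : ∑ k, ‖V k z‖ ^ 2 = 0 :=
    calc ∑ k, ‖V k z‖ ^ 2 = RCLike.re (inner 𝕜 ((∑ k, star (V k) * V k) z) z) := by
          simp [ContinuousLinearMap.apply_norm_sq_eq_inner_adjoint_left, sum_inner,
            ContinuousLinearMap.star_eq_adjoint, ContinuousLinearMap.mul_def]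
      _ = 0 := by rw [hz, inner_zero_left, map_zero]
  simpa using (Finset.sum_eq_zero_iff_of_nonneg fun k _ => sq_nonneg ‖V k z‖).mp hsum i
    (Finset.mem_univ i)

lemma IsSelfAdjoint.eq_zero_of_mul_eq_zero {P D : E →L[𝕜] E} (hP : IsSelfAdjoint P)
    (hDP : D * P = 0) (hker : ∀ z, P z = 0 → D z = 0) : D = 0 := by
  have hPD : P * star D = 0 := by simpa [hP.star_eq] using congrArg star hDP
  have : D * star D = 0 := by
    ext x
    exact hker _ (by simpa using congrArg (· x) hPD)
  exact (CStarRing.mul_star_self_eq_zero_iff D).mp this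

lemma apply_eq_zero_of_sum_star_mul_self_eq_starProjection {ι : Type*} [Fintype ι]
    {V : ι → E →L[𝕜] E} {K : Submodule 𝕜 E} [K.HasOrthogonalProjection]
    (hV : ∑ i, star (V i) * V i = K.starProjection) {z : E} (hz : z ∈ Kᗮ) (i : ι) :
    V i z = 0 :=
  apply_eq_zero_of_sum_star_mul_self_apply_eq_zero
    (by rwa [hV, Submodule.starProjection_apply_eq_zero_iff]) i

end HilbertSpace

section SphericalPolar

variable {H ι : Type*} [NormedAddCommGroup H] [InnerProductSpace ℂ H] [CompleteSpace H]
  {T V : ι → H →L[ℂ] H} {P : H →L[ℂ] H}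

/-- Commutativity of `T` says `(V i * P * V j - V j * P * V i) * P = 0`, and this difference also
kills `ker P`. -/
lemma polar_factor_mul_mul_comm (hcomm : ∀ i j, T i * T j = T j * T i)
    (hpolar : ∀ i, T i = V i * P) (hP : IsSelfAdjoint P)
    (hV : ∀ i z, P z = 0 → V i z = 0) (i j : ι) : V i * P * V j = V j * P * V i := by
  refine sub_eq_zero.mp (hP.eq_zero_of_mul_eq_zero ?_ fun z hz => ?_)
  · simpa only [sub_mul, mul_assoc, hpolar, sub_eq_zero] using hcomm i j
  · simp [hV i z hz, hV j z hz]

end SphericalPolar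

theorem right_spectrum_of_spherical_aluthge_general
    {H : Type*} [NormedAddCommGroup H] [InnerProductSpace ℂ H] [CompleteSpace H]
    {d : ℕ} (T V : Fin d → H →L[ℂ] H) (P : H →L[ℂ] H)
    (hcomm : ∀ i j, T i * T j = T j * T i)
    (hPpos : 0 ≤ P)
    (hpolar : ∀ i, T i = V i * P)
    (hproj : ∑ i, star (V i) * V i =
      ((LinearMap.ker (P : H →ₗ[ℂ] H))ᗮ).subtypeL.comp
        ((LinearMap.ker (P : H →ₗ[ℂ] H))ᗮ).orthogonalProjectionOnto)
    (t : ℝ) (ht0 : 0 < t) (ht1 : t ≤ 1) :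
    (∀ lam : Fin d → ℂ,
      (∃ B : Fin d → H →L[ℂ] H,
        ∑ i, (CFC.rpow P t * V i * CFC.rpow P (1 - t) - lam i • 1) * B i = 1) →
      ∃ B : Fin d → H →L[ℂ] H, ∑ i, (T i - lam i • 1) * B i = 1) ∧
    (∀ lam : Fin d → ℂ, lam ≠ 0 →
      (∃ B : Fin d → H →L[ℂ] H, ∑ i, (T i - lam i • 1) * B i = 1) →
      ∃ B : Fin d → H →L[ℂ] H,
        ∑ i, (CFC.rpow P t * V i * CFC.rpow P (1 - t) - lam i • 1) * B i = 1) := by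
  set Q := CFC.rpow P t
  set R := CFC.rpow P (1 - t)
  have hRQ : R * Q = P := by
    have := CFC.rpow_add_of_nonneg P (x := 1 - t) (y := t) (by linarith) ht0.le (by norm_num)
    rwa [sub_add_cancel, CFC.rpow_one P, eq_comm] at this
  have hVker : ∀ i z, P z = 0 → V i z = 0 := fun i z hz =>
    apply_eq_zero_of_sum_star_mul_self_eq_starProjection hproj
      (Submodule.le_orthogonal_orthogonal _ hz) i
  have hQ : ∀ i, SemiconjBy Q (T i) (Q * V i * R) := fun i => by
    rw [SemiconjBy, hpolar, mul_assoc _ R, hRQ, mul_assoc]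
  have hVR : ∀ j i, SemiconjBy (V j * R) (Q * V i * R) (T i) := fun j i => by
    calc V j * R * (Q * V i * R) = V j * (R * Q) * V i * R := by simp only [mul_assoc]
      _ = V i * P * V j * R := by
        rw [hRQ, polar_factor_mul_mul_comm hcomm hpolar hPpos.isSelfAdjoint hVker]
      _ = T i * (V j * R) := by rw [hpolar, mul_assoc]
  constructor
  · intro lam hΔ
    by_cases hlam : lam = 0
    · subst hlam
      obtain ⟨B, hB⟩ := hΔ
      have hQunit : IsUnit Q := (CFC.rpow_nonneg).isSelfAdjoint.isUnit_of_mul_eq_one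
        (b := ∑ i, V i * R * B i) (by simpa [Finset.mul_sum, mul_assoc] using hB)
      exact IsRightInvertibleTuple.of_semiconjBy_of_mul_eq_one
        (fun i => (hQ i).units_inv_symm_left (a := hQunit.unit)) hQunit.unit.inv_mul ⟨B, hB⟩
    · obtain ⟨j, hj⟩ := Function.ne_iff.mp hlam
      exact IsRightInvertibleTuple.of_semiconjBy_of_mul_eq (hVR j)
        (by rw [mul_assoc, hRQ, hpolar]) hj hΔ
  · intro lam hlam hT
    obtain ⟨j, hj⟩ := Function.ne_iff.mp hlam
    exact IsRightInvertibleTuple.of_semiconjBy_of_mul_eq hQ (mul_assoc _ _ _).symm hj hT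

/-- For `0 < t ≤ 1`: the right spectra satisfy `σᵣ(T) ⊆ σᵣ(Δₜ(T)) ⊆ σᵣ(T) ∪ {0}`. -/
theorem right_spectrum_of_spherical_aluthge
    {H : Type*} [NormedAddCommGroup H] [InnerProductSpace ℂ H] [CompleteSpace H]
    {d : ℕ} (hd : 1 ≤ d) (T V : Fin d → H →L[ℂ] H) (P : H →L[ℂ] H)
    (hcomm : ∀ i j, T i * T j = T j * T i)
    (hPpos : 0 ≤ P)
    (hP2 : P * P = ∑ i, star (T i) * T i)
    (hpolar : ∀ i, T i = V i * P)
    (hproj : ∑ i, star (V i) * V i =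
      ((LinearMap.ker (P : H →ₗ[ℂ] H))ᗮ).subtypeL.comp
        ((LinearMap.ker (P : H →ₗ[ℂ] H))ᗮ).orthogonalProjectionOnto)
    (t : ℝ) (ht0 : 0 < t) (ht1 : t ≤ 1) :
    (∀ lam : Fin d → ℂ,
      (∃ B : Fin d → H →L[ℂ] H,
        ∑ i, (CFC.rpow P t * V i * CFC.rpow P (1 - t) - lam i • 1) * B i = 1) →
      ∃ B : Fin d → H →L[ℂ] H, ∑ i, (T i - lam i • 1) * B i = 1) ∧
    (∀ lam : Fin d → ℂ, lam ≠ 0 →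
      (∃ B : Fin d → H →L[ℂ] H, ∑ i, (T i - lam i • 1) * B i = 1) →
      ∃ B : Fin d → H →L[ℂ] H,
        ∑ i, (CFC.rpow P t * V i * CFC.rpow P (1 - t) - lam i • 1) * B i = 1) :=
  right_spectrum_of_spherical_aluthge_general T V P hcomm hPpos hpolar hproj t ht0 ht1
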